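/- arXiv:2505.20112 — 2 statements merged into one kernel-verified Lean document; each statement's English description precedes it below -/
import Mathlib

section
/- Eckart–Young–Mirsky theorem (Frobenius norm, optimality of SVD truncation): Let A be a real m×n matrix with singular value decomposition A = U Σ Vᵀ, where U is an m×m orthogonal matrix, V is an n×n orthogonal matrix, and Σ is the m×n matrix with Σᵢⱼ = σᵢ if i = j (as natural-number indices) and Σᵢⱼ = 0 otherwise, with σ₀ ≥ σ₁ ≥ … ≥ σ_{min(m,n)−1} ≥ 0. For 0 ≤ r ≤ min(m,n), define the rank-r truncation A_r = U Σ_r Vᵀ, where Σ_r agrees with Σ on entries (i,j) with i = j < r and is 0 elsewhere. Then for every real m×n matrix B with rank(B) ≤ r, one has ‖A − A_r‖_F ≤ ‖A − B‖_F. -/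
open Matrix

/-- The Frobenius norm of a real matrix: `sqrt (∑ i j, (M i j)^2)`. -/
noncomputable def frobNorm {m n : ℕ} (M : Matrix (Fin m) (Fin n) ℝ) : ℝ :=
  Real.sqrt (∑ i, ∑ j, (M i j) ^ 2)

/-!
Orthogonal invariance of the Frobenius norm reduces the claim to `A = Σ`, with `B` replaced by
`C = Uᵀ B V`, still of rank at most `r`. The kernel of `C` carries an orthonormal family
`w₁, …, w_d` with `d ≥ n - r`. Since `C wₖ = 0`, Bessel's inequality applied to the rows of `Σ - C`
gives `‖Σ - C‖² ≥ ∑ₖ ‖Σ wₖ‖² = ∑ⱼ σⱼ² tⱼ`, where the weights `tⱼ = ∑ₖ wₖ(j)²` lie in `[0, 1]`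
(Bessel again) and add up to `d`. Such a weighted sum of the nonincreasing `σⱼ²` is at least the sum
of the `n - r` smallest ones, which is `‖Σ - Σ_r‖²`.
-/

open Finset

theorem sum_le_sum_mul_of_threshold {ι : Type*} [Fintype ι] (S : Finset ι) {c t : ι → ℝ}
    {a : ℝ} (ha : 0 ≤ a) (hS : ∀ i ∈ S, c i ≤ a) (hSc : ∀ i ∉ S, a ≤ c i)
    (ht0 : ∀ i, 0 ≤ t i) (ht1 : ∀ i, t i ≤ 1) (hsum : (#S : ℝ) ≤ ∑ i, t i) :
    ∑ i ∈ S, c i ≤ ∑ i, c i * t i := by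
  classical
  set e : ι → ℝ := fun i => if i ∈ S then 1 else 0
  have key : ∀ i, c i * (e i - t i) ≤ a * (e i - t i) := by
    intro i
    by_cases hi : i ∈ S
    · simp only [e, if_pos hi]
      exact mul_le_mul_of_nonneg_right (hS i hi) (by linarith [ht1 i])
    · simp only [e, if_neg hi, zero_sub, mul_neg, neg_le_neg_iff]
      exact mul_le_mul_of_nonneg_right (hSc i hi) (ht0 i)
  have he : ∑ i, e i = #S := by simp [e]
  have hce : ∑ i, c i * e i = ∑ i ∈ S, c i := by simp [e]
  have := sum_le_sum fun i (_ : i ∈ univ) => key i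
  simp only [mul_sub, sum_sub_distrib, ← mul_sum, he, hce] at this
  nlinarith

section Orthonormal

variable {κ d : Type*} [Fintype κ] [Fintype d] {w : d → EuclideanSpace ℝ κ}

theorem Orthonormal.sum_sq_dotProduct_le (hw : Orthonormal ℝ w) (v : κ → ℝ) :
    ∑ k, (v ⬝ᵥ w k) ^ 2 ≤ ∑ j, v j ^ 2 := by
  have h := hw.sum_inner_products_le (s := univ) (WithLp.toLp 2 v)
  rw [EuclideanSpace.norm_sq_eq] at h
  simpa [PiLp.inner_apply, dotProduct, mul_comm] using h

theorem Orthonormal.sum_sq_apply_le_one [DecidableEq κ] (hw : Orthonormal ℝ w) (j : κ) :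
    ∑ k, w k j ^ 2 ≤ 1 := by
  simpa [Pi.single_apply, apply_ite (· ^ 2)] using hw.sum_sq_dotProduct_le (Pi.single j 1)

theorem Orthonormal.sum_sum_sq_apply (hw : Orthonormal ℝ w) :
    ∑ j, ∑ k, w k j ^ 2 = Fintype.card d := by
  rw [sum_comm]
  have h : ∀ k, ∑ j, w k j ^ 2 = 1 := fun k => by
    simpa [EuclideanSpace.norm_sq_eq, hw.1 k] using (EuclideanSpace.norm_sq_eq (w k)).symm
  simp [h]

theorem Orthonormal.sum_sum_sq_mulVec_le {ι : Type*} [Fintype ι] (hw : Orthonormal ℝ w)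
    (N : Matrix ι κ ℝ) : ∑ k, ∑ i, (N *ᵥ w k) i ^ 2 ≤ ∑ i, ∑ j, N i j ^ 2 := by
  rw [sum_comm]
  exact sum_le_sum fun i _ => by simpa [mulVec] using hw.sum_sq_dotProduct_le (N i)

end Orthonormal

theorem exists_orthonormal_mulVec_eq_zero {ι κ : Type*} [Fintype ι] [Fintype κ]
    [DecidableEq κ] (C : Matrix ι κ ℝ) :
    ∃ (d : ℕ) (w : Fin d → EuclideanSpace ℝ κ), Orthonormal ℝ w ∧ (∀ k, C *ᵥ w k = 0) ∧
      Fintype.card κ ≤ C.rank + d := by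
  set K := LinearMap.ker (toEuclideanLin C)
  let b := stdOrthonormalBasis ℝ K
  refine ⟨_, fun k => b k, b.orthonormal.comp_linearIsometry K.subtypeₗᵢ, fun k => ?_, ?_⟩
  · have : toEuclideanLin C (b k) = 0 := (b k).2
    simpa only [ofLp_toLpLin, toLin'_apply, WithLp.ofLp_zero] using congrArg WithLp.ofLp this
  · have hrank : C.rank = Module.finrank ℝ (LinearMap.range (toEuclideanLin C)) := by
      rw [toEuclideanLin_eq_toLin_orthonormal]
      exact rank_eq_finrank_range_toLin _ _ _
    rw [hrank, LinearMap.finrank_range_add_finrank_ker, finrank_euclideanSpace]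

theorem sum_sum_sq_eq_trace_transpose_mul_self {ι κ : Type*} [Fintype ι] [Fintype κ]
    (M : Matrix ι κ ℝ) : ∑ i, ∑ j, M i j ^ 2 = (Mᵀ * M).trace := by
  rw [sum_comm]
  simp [trace, mul_apply, sq]

section OrthogonalColumns

variable {ι κ : Type*} [Fintype ι] [DecidableEq κ] {M : Matrix ι κ ℝ} {c : κ → ℝ}

theorem sum_sq_apply_of_transpose_mul_self_eq_diagonal (hM : Mᵀ * M = diagonal c) (j : κ) :
    ∑ i, M i j ^ 2 = c j := by
  simpa [mul_apply, sq] using congrFun (congrFun hM j) j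

theorem sum_sq_mulVec_of_transpose_mul_self_eq_diagonal [Fintype κ] (hM : Mᵀ * M = diagonal c)
    (x : κ → ℝ) : ∑ i, (M *ᵥ x) i ^ 2 = ∑ j, c j * x j ^ 2 := by
  have h : (M *ᵥ x) ⬝ᵥ (M *ᵥ x) = x ⬝ᵥ ((Mᵀ * M) *ᵥ x) := by
    rw [dotProduct_mulVec, ← vecMul_transpose, vecMul_vecMul, ← dotProduct_mulVec]
  rw [hM] at h
  simpa [dotProduct, mulVec_diagonal, sq, mul_left_comm] using h

theorem sum_sum_sq_truncate_of_transpose_mul_self_eq_diagonal [Fintype κ]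
    (hM : Mᵀ * M = diagonal c) (S : Finset κ) :
    ∑ i, ∑ j, (if j ∈ S then M i j else 0) ^ 2 = ∑ j ∈ S, c j := by
  rw [sum_comm]
  calc _ = ∑ j, if j ∈ S then c j else 0 := sum_congr rfl fun j _ => by
          split_ifs
          · exact sum_sq_apply_of_transpose_mul_self_eq_diagonal hM j
          · simp
    _ = ∑ j ∈ S, c j := by rw [sum_ite_mem, univ_inter]

theorem sum_le_sum_sum_sq_sub_of_transpose_mul_self_eq_diagonal [Fintype κ]
    (hM : Mᵀ * M = diagonal c) {S : Finset κ} {a : ℝ} (ha : 0 ≤ a)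
    (hS : ∀ j ∈ S, c j ≤ a) (hSc : ∀ j ∉ S, a ≤ c j) {C : Matrix ι κ ℝ}
    (hC : C.rank ≤ #Sᶜ) :
    ∑ j ∈ S, c j ≤ ∑ i, ∑ j, (M - C) i j ^ 2 := by
  obtain ⟨d, w, hw, hCw, hd⟩ := exists_orthonormal_mulVec_eq_zero C
  have hcard : (#S : ℝ) ≤ ∑ j, ∑ k, w k j ^ 2 := by
    rw [hw.sum_sum_sq_apply, Fintype.card_fin]
    rw [card_compl] at hC
    have := card_le_univ S
    exact_mod_cast (by omega : #S ≤ d)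
  calc ∑ j ∈ S, c j ≤ ∑ j, c j * ∑ k, w k j ^ 2 :=
        sum_le_sum_mul_of_threshold S ha hS hSc (fun j => by positivity)
          hw.sum_sq_apply_le_one hcard
    _ = ∑ k, ∑ i, ((M - C) *ᵥ w k) i ^ 2 := by
        simp_rw [sub_mulVec, hCw, sub_zero, sum_sq_mulVec_of_transpose_mul_self_eq_diagonal hM,
          mul_sum]
        exact sum_comm
    _ ≤ ∑ i, ∑ j, (M - C) i j ^ 2 := hw.sum_sum_sq_mulVec_le _

end OrthogonalColumns

theorem frobNorm_mul_mul_transpose {m n : ℕ} {U : Matrix (Fin m) (Fin m) ℝ}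
    {V : Matrix (Fin n) (Fin n) ℝ} (hU : Uᵀ * U = 1) (hV : Vᵀ * V = 1)
    (M : Matrix (Fin m) (Fin n) ℝ) : frobNorm (U * M * Vᵀ) = frobNorm M := by
  have h : (U * M * Vᵀ)ᵀ * (U * M * Vᵀ) = V * (Mᵀ * M) * Vᵀ := by
    simp only [transpose_mul, transpose_transpose, Matrix.mul_assoc]
    rw [← Matrix.mul_assoc Uᵀ, hU, Matrix.one_mul]
  unfold frobNorm
  rw [sum_sum_sq_eq_trace_transpose_mul_self, sum_sum_sq_eq_trace_transpose_mul_self, h,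
    trace_mul_cycle, hV, Matrix.one_mul]

theorem transpose_mul_self_eq_diagonal_of_eq_ite {m n : ℕ}
    {Sig : Matrix (Fin m) (Fin n) ℝ} {σ : ℕ → ℝ}
    (hSig : ∀ i j, Sig i j = if (i : ℕ) = j then σ i else 0) :
    Sigᵀ * Sig = diagonal fun j : Fin n => if (j : ℕ) < m then σ j ^ 2 else 0 := by
  ext j j'
  have h : ∀ i : Fin m, Sig i j * Sig i j' =
      if (i : ℕ) = j then (if j = j' then σ j ^ 2 else 0) else 0 := fun i => by
    simp only [hSig, ← Fin.val_inj]
    split_ifs <;> simp_all [sq]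
  simp only [mul_apply, transpose_apply, h, diagonal_apply]
  rw [Fin.sum_univ_eq_sum_range (fun i => if i = (j : ℕ) then _ else 0), sum_ite_eq']
  simp only [mem_range]
  split_ifs <;> rfl

theorem antitone_ite_sq {p : ℕ} {σ : ℕ → ℝ} (hmono : ∀ i, i + 1 < p → σ (i + 1) ≤ σ i)
    (hnonneg : ∀ i < p, 0 ≤ σ i) : Antitone fun k => if k < p then σ k ^ 2 else 0 := by
  refine antitone_nat_of_succ_le fun k => ?_
  by_cases hk : k + 1 < p
  · simp only [hk, if_true, show k < p by omega]
    exact pow_le_pow_left₀ (hnonneg _ hk) (hmono k hk) 2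
  · simp only [hk, if_false]
    split_ifs <;> positivity

theorem sum_sum_sq_truncate_le_sum_sum_sq_sub_of_eq_ite {m n : ℕ}
    {Sig C : Matrix (Fin m) (Fin n) ℝ} {σ : ℕ → ℝ}
    (hSig : ∀ i j, Sig i j = if (i : ℕ) = j then σ i else 0)
    (hmono : ∀ i, i + 1 < min m n → σ (i + 1) ≤ σ i) (hnonneg : ∀ i < min m n, 0 ≤ σ i)
    {r : ℕ} (hC : C.rank ≤ r) :
    ∑ i, ∑ j : Fin n, (if r ≤ (j : ℕ) then Sig i j else 0) ^ 2 ≤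
      ∑ i, ∑ j, (Sig - C) i j ^ 2 := by
  set S := univ.filter fun j : Fin n => r ≤ (j : ℕ)
  set c : ℕ → ℝ := fun k => if k < min m n then σ k ^ 2 else 0
  have hc : Antitone c := antitone_ite_sq hmono hnonneg
  have hcj (j : Fin n) : (if (j : ℕ) < m then σ j ^ 2 else 0) = c j := by
    simp only [c, lt_min_iff, j.isLt, and_true]
  have hcS : ∀ j ∈ S, (if (j : ℕ) < m then σ j ^ 2 else 0) ≤ c r := fun j hj =>
    (hcj j).trans_le (hc (mem_filter.1 hj).2)
  have hcSc : ∀ j ∉ S, c r ≤ (if (j : ℕ) < m then σ j ^ 2 else 0) := fun j hj =>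
    (hc (not_le.1 fun h => hj (mem_filter.2 ⟨mem_univ j, h⟩)).le).trans_eq (hcj j).symm
  have hCS : C.rank ≤ #Sᶜ := by
    simpa only [S, compl_filter, not_le, Fin.card_filter_val_lt]
      using le_min (rank_le_width C) hC
  have hSig2 := transpose_mul_self_eq_diagonal_of_eq_ite hSig
  have htrunc := sum_sum_sq_truncate_of_transpose_mul_self_eq_diagonal hSig2 S
  simp only [S, mem_filter, mem_univ, true_and] at htrunc
  rw [htrunc]
  exact sum_le_sum_sum_sq_sub_of_transpose_mul_self_eq_diagonal hSig2 (by positivity)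
    hcS hcSc hCS

theorem eckart_young_mirsky_general {m n : ℕ}
    (A Sig : Matrix (Fin m) (Fin n) ℝ)
    (U : Matrix (Fin m) (Fin m) ℝ) (V : Matrix (Fin n) (Fin n) ℝ)
    (σ : ℕ → ℝ)
    (hU : Uᵀ * U = 1) (hU' : U * Uᵀ = 1)
    (hV : Vᵀ * V = 1) (hV' : V * Vᵀ = 1)
    (hSig : ∀ (i : Fin m) (j : Fin n), Sig i j = if (i : ℕ) = (j : ℕ) then σ (i : ℕ) else 0)
    (hmono : ∀ i : ℕ, i + 1 < min m n → σ (i + 1) ≤ σ i)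
    (hnonneg : ∀ i : ℕ, i < min m n → 0 ≤ σ i)
    (hA : A = U * Sig * Vᵀ)
    (r : ℕ)
    (Ar : Matrix (Fin m) (Fin n) ℝ)
    (hAr : Ar = U * (Matrix.of fun (i : Fin m) (j : Fin n) =>
      if (i : ℕ) = (j : ℕ) ∧ (i : ℕ) < r then σ (i : ℕ) else 0) * Vᵀ)
    (B : Matrix (Fin m) (Fin n) ℝ) (hB : B.rank ≤ r) :
    frobNorm (A - Ar) ≤ frobNorm (A - B) := by
  set C := Uᵀ * B * V
  have hC : C.rank ≤ r := (rank_mul_le_left _ _).trans ((rank_mul_le_right _ _).trans hB)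
  have hAB : A - B = U * (Sig - C) * Vᵀ := by
    simp only [hA, C, Matrix.mul_sub, Matrix.sub_mul, ← Matrix.mul_assoc, hU', Matrix.one_mul]
    rw [Matrix.mul_assoc B, hV', Matrix.mul_one]
  have hAAr :
      A - Ar = U * (of fun i (j : Fin n) => if r ≤ (j : ℕ) then Sig i j else 0) * Vᵀ := by
    rw [hA, hAr, ← Matrix.sub_mul, ← Matrix.mul_sub]
    congr 2
    ext i j
    simp only [Matrix.sub_apply, of_apply, hSig]
    split_ifs <;> grind
  rw [hAB, hAAr, frobNorm_mul_mul_transpose hU hV, frobNorm_mul_mul_transpose hU hV]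
  exact Real.sqrt_le_sqrt
    (sum_sum_sq_truncate_le_sum_sum_sq_sub_of_eq_ite hSig hmono hnonneg hC)

/-- **Eckart–Young–Mirsky theorem** (Frobenius norm): given a singular value
decomposition `A = U Σ Vᵀ` with nonincreasing nonnegative singular values `σ`,
the rank-`r` SVD truncation `A_r = U Σ_r Vᵀ` is a best rank-`r` approximation of `A`
in the Frobenius norm. -/
theorem eckart_young_mirsky {m n : ℕ}
    (A Sig : Matrix (Fin m) (Fin n) ℝ)
    (U : Matrix (Fin m) (Fin m) ℝ) (V : Matrix (Fin n) (Fin n) ℝ)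
    (σ : ℕ → ℝ)
    (hU : Uᵀ * U = 1) (hU' : U * Uᵀ = 1)
    (hV : Vᵀ * V = 1) (hV' : V * Vᵀ = 1)
    (hSig : ∀ (i : Fin m) (j : Fin n), Sig i j = if (i : ℕ) = (j : ℕ) then σ (i : ℕ) else 0)
    (hmono : ∀ i : ℕ, i + 1 < min m n → σ (i + 1) ≤ σ i)
    (hnonneg : ∀ i : ℕ, i < min m n → 0 ≤ σ i)
    (hA : A = U * Sig * Vᵀ)
    (r : ℕ) (hr : r ≤ min m n)
    (Ar : Matrix (Fin m) (Fin n) ℝ)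
    (hAr : Ar = U * (Matrix.of fun (i : Fin m) (j : Fin n) =>
      if (i : ℕ) = (j : ℕ) ∧ (i : ℕ) < r then σ (i : ℕ) else 0) * Vᵀ)
    (B : Matrix (Fin m) (Fin n) ℝ) (hB : B.rank ≤ r) :
    frobNorm (A - Ar) ≤ frobNorm (A - B) :=
  eckart_young_mirsky_general A Sig U V σ hU hU' hV hV' hSig hmono hnonneg hA r Ar hAr B hB
end

section
/- Existence of a best rank-r Frobenius approximation: For every real m×n matrix A and every natural number r, there exists a real m×n matrix A_r with rank(A_r) ≤ r such that for all real m×n matrices B with rank(B) ≤ r, ‖A − A_r‖_F ≤ ‖A − B‖_F. -/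
/-!
Rank is lower semicontinuous: if `A` has rank `> r`, the images under `A` of some `r + 1`
vectors are linearly independent, and linear independence survives small perturbations.
Hence the matrices of rank at most `r` form a closed set, and a nonempty closed set in the
finite-dimensional (hence proper) space of matrices with the Frobenius metric contains a
point nearest to `A`.
-/

open Matrix

theorem Matrix.isClosed_setOf_rank_le {𝕜 : Type*} [NontriviallyNormedField 𝕜] [CompleteSpace 𝕜]
    {m n : Type*} [Fintype m] [Fintype n] (r : ℕ) :
    IsClosed {A : Matrix m n 𝕜 | A.rank ≤ r} := by
  let toCLM : Matrix m n 𝕜 → (n → 𝕜) →L[𝕜] (m → 𝕜) := fun A =>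
    LinearMap.toContinuousLinearMap A.mulVecLin
  have hcont : Continuous toCLM :=
    continuous_clm_apply.2 fun _ => continuous_id.matrix_mulVec continuous_const
  have hcompl : {A : Matrix m n 𝕜 | A.rank ≤ r}ᶜ =
      toCLM ⁻¹' {f | ((r + 1 : ℕ) : Cardinal) ≤ (f : (n → 𝕜) →ₗ[𝕜] (m → 𝕜)).rank} := by
    ext A
    change ¬ A.rank ≤ r ↔ ((r + 1 : ℕ) : Cardinal) ≤ Module.rank 𝕜 (LinearMap.range A.mulVecLin)
    rw [← Module.finrank_eq_rank, Nat.cast_le, not_le, Nat.lt_iff_add_one_le]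
    rfl
  rw [← isOpen_compl_iff, hcompl]
  exact (isOpen_setOfPred_nat_le_rank (r + 1)).preimage hcont

theorem IsClosed.exists_forall_dist_le {α : Type*} [PseudoMetricSpace α] [ProperSpace α]
    {s : Set α} (hs : IsClosed s) (hne : s.Nonempty) (x : α) :
    ∃ y ∈ s, ∀ z ∈ s, dist x y ≤ dist x z := by
  obtain ⟨y, hy, hdist⟩ := hs.exists_infDist_eq_dist hne x
  exact ⟨y, hy, fun z hz => hdist ▸ Metric.infDist_le_dist_of_mem hz⟩

attribute [local instance] Matrix.frobeniusNormedAddCommGroup Matrix.frobeniusNormedSpace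

theorem frobNorm_eq_norm {m n : ℕ} (M : Matrix (Fin m) (Fin n) ℝ) : frobNorm M = ‖M‖ := by
  simp [frobNorm, Matrix.frobenius_norm_def, Real.sqrt_eq_rpow]

/-- **Existence of a best rank-`r` Frobenius approximation**: every real `m × n`
matrix `A` admits a matrix `A_r` of rank at most `r` minimizing `‖A − B‖_F`
over all matrices `B` of rank at most `r`. -/
theorem exists_best_rank_approx {m n : ℕ} (A : Matrix (Fin m) (Fin n) ℝ) (r : ℕ) :
    ∃ Ar : Matrix (Fin m) (Fin n) ℝ, Ar.rank ≤ r ∧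
      ∀ B : Matrix (Fin m) (Fin n) ℝ, B.rank ≤ r →
        frobNorm (A - Ar) ≤ frobNorm (A - B) := by
  have : ProperSpace (Matrix (Fin m) (Fin n) ℝ) := FiniteDimensional.proper_real _
  obtain ⟨Ar, hAr, hnearest⟩ :=
    (Matrix.isClosed_setOf_rank_le r).exists_forall_dist_le ⟨0, by simp⟩ A
  refine ⟨Ar, hAr, fun B hB => ?_⟩
  rw [frobNorm_eq_norm, frobNorm_eq_norm, ← dist_eq_norm A Ar, ← dist_eq_norm A B]
  exact hnearest B hB
end
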